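/- The ratio a_n/A_n of the number of connected labeled DAGs on n vertices to the number of labeled DAGs on n vertices tends to 1 as n tends to infinity. -/

import Mathlib

/-!
Fix a vertex `v`. A disconnected DAG on `n` vertices is determined by its restrictions to the
weak component `S` of `v` and to the complement of `S`, where `∅ ≠ S ≠ univ`; so for each such
`S` at most `A_{|S|} A_{n-|S|}` disconnected DAGs have weak component `S` at `v`. Conversely, a
DAG on `k` vertices, a DAG on the other `n - k` vertices and any set of edges from the first part
to the second form a DAG, so `A_k A_{n-k} 2^{k(n-k)} ≤ A_n`. Hence the proportion of disconnected
DAGs is at most `∑_S 2^{-|S|(n-|S|)}`; since `k(n-k) ≥ ⌊n/2⌋ min(k, n-k)`, this is at most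
`2((1 + 2^{-⌊n/2⌋})^n - 1)`, which tends to `0`.
-/

open Filter Finset

/-- A directed graph (given by its edge relation) is acyclic iff no vertex lies on a
directed cycle, i.e. the transitive closure is irreflexive. -/
def DigraphAcyclic {V : Type*} (g : V → V → Prop) : Prop :=
  ∀ a, ¬ Relation.TransGen g a a

/-- The number of labeled DAGs on `n` vertices. -/
noncomputable def dagCount (n : ℕ) : ℕ :=
  Nat.card {g : Fin n → Fin n → Bool // DigraphAcyclic fun x y => g x y = true}

/-- The number of connected labeled DAGs on `n` vertices (connected means the
underlying undirected graph is connected). -/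
noncomputable def connDagCount (n : ℕ) : ℕ :=
  Nat.card {g : Fin n → Fin n → Bool //
    (DigraphAcyclic fun x y => g x y = true) ∧
    ∀ a b : Fin n, Relation.ReflTransGen (fun x y => g x y = true ∨ g y x = true) a b}

open Relation

variable {V W : Type*}

theorem DigraphAcyclic.comap {r : V → V → Prop} (h : DigraphAcyclic r) (f : W → V) :
    DigraphAcyclic fun x y => r (f x) (f y) :=
  fun a ha => h (f a) (ha.lift f fun _ _ => id)

theorem DigraphAcyclic.of_le_sumLex {r₁ : V → V → Prop} {r₂ : W → W → Prop}
    {r : V ⊕ W → V ⊕ W → Prop} (h₁ : DigraphAcyclic r₁) (h₂ : DigraphAcyclic r₂)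
    (hr : r ≤ Sum.Lex (TransGen r₁) (TransGen r₂)) : DigraphAcyclic r := by
  intro a ha
  have hlex := TransGen.mono hr a a ha
  rw [transGen_eq_self] at hlex
  rcases hlex with ⟨h⟩ | ⟨h⟩
  · exact h₁ _ h
  · exact h₂ _ h

abbrev BoolDAG (V : Type*) := {g : V → V → Bool // DigraphAcyclic fun x y => g x y = true}

def BoolDAG.congr (e : V ≃ W) : BoolDAG V ≃ BoolDAG W :=
  (e.arrowCongr (e.arrowCongr (Equiv.refl Bool))).subtypeEquiv fun g =>
    ⟨fun h => h.comap e.symm, fun h => by simpa using h.comap e⟩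

theorem BoolDAG.card_eq_dagCount [Fintype V] :
    Nat.card (BoolDAG V) = dagCount (Fintype.card V) :=
  Nat.card_congr (BoolDAG.congr (Fintype.equivFin V))

theorem dagCount_pos (n : ℕ) : 0 < dagCount n :=
  have : Nonempty (BoolDAG (Fin n)) :=
    ⟨⟨fun _ _ => false, fun _ h => by simpa using TransGen.head'_iff.mp h⟩⟩
  Nat.card_pos

def sumGraph (g₁ : V → V → Bool) (g₂ : W → W → Bool) (h : V → W → Bool) :
    V ⊕ W → V ⊕ W → Bool
  | .inl x, .inl y => g₁ x y
  | .inr x, .inr y => g₂ x y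
  | .inl x, .inr y => h x y
  | .inr _, .inl _ => false

theorem sumGraph_acyclic {g₁ : V → V → Bool} {g₂ : W → W → Bool} (h : V → W → Bool)
    (h₁ : DigraphAcyclic fun x y => g₁ x y = true)
    (h₂ : DigraphAcyclic fun x y => g₂ x y = true) :
    DigraphAcyclic fun a b => sumGraph g₁ g₂ h a b = true :=
  h₁.of_le_sumLex h₂ fun
    | .inl _, .inl _, hab => .inl (.single hab)
    | .inr _, .inr _, hab => .inr (.single hab)
    | .inl _, .inr _, _ => .sep _ _
    | .inr _, .inl _, hab => by simp [sumGraph] at hab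

theorem card_boolDAG_mul_le_card_boolDAG_sum [Fintype V] [Fintype W] :
    Nat.card (BoolDAG V) * Nat.card (BoolDAG W) * 2 ^ (Fintype.card V * Fintype.card W) ≤
      Nat.card (BoolDAG (V ⊕ W)) := by
  have hcross : 2 ^ (Fintype.card V * Fintype.card W) = Nat.card (V → W → Bool) := by
    rw [Nat.card_fun, Nat.card_fun]
    simp [← pow_mul, mul_comm]
  rw [hcross, ← Nat.card_prod, ← Nat.card_prod]
  refine Nat.card_le_card_of_injective
    (fun p => ⟨sumGraph p.1.1.1 p.1.2.1 p.2, sumGraph_acyclic p.2 p.1.1.2 p.1.2.2⟩) ?_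
  rintro ⟨⟨⟨g₁, _⟩, ⟨g₂, _⟩⟩, h⟩ ⟨⟨⟨g₁', _⟩, ⟨g₂', _⟩⟩, h'⟩ heq
  have heq' := congrArg Subtype.val heq
  obtain rfl : g₁ = g₁' := funext₂ fun x y => congrFun₂ heq' (.inl x) (.inl y)
  obtain rfl : g₂ = g₂' := funext₂ fun x y => congrFun₂ heq' (.inr x) (.inr y)
  obtain rfl : h = h' := funext₂ fun x y => congrFun₂ heq' (.inl x) (.inr y)
  rfl

theorem dagCount_mul_dagCount_mul_two_pow_le (k m : ℕ) :
    dagCount k * dagCount m * 2 ^ (k * m) ≤ dagCount (k + m) := by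
  simpa [BoolDAG.card_eq_dagCount] using
    card_boolDAG_mul_le_card_boolDAG_sum (V := Fin k) (W := Fin m)

def BoolDAG.restrict (g : BoolDAG V) (S : Finset V) : BoolDAG S :=
  ⟨fun x y => g.1 x y, g.2.comap Subtype.val⟩

def IsWeaklyConnected (g : V → V → Bool) : Prop :=
  ∀ a b, ReflTransGen (fun x y => g x y = true ∨ g y x = true) a b

section Component

variable [Fintype V]

open Classical in
noncomputable def weakComponent (g : V → V → Bool) (v : V) : Finset V :=
  {x | ReflTransGen (fun x y => g x y = true ∨ g y x = true) v x}

variable {g : V → V → Bool} {v x y : V}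

theorem mem_weakComponent :
    x ∈ weakComponent g v ↔ ReflTransGen (fun x y => g x y = true ∨ g y x = true) v x := by
  simp [weakComponent]

theorem eq_false_of_mem_weakComponent_of_not_mem (hx : x ∈ weakComponent g v)
    (hy : y ∉ weakComponent g v) : g x y = false ∧ g y x = false := by
  rw [mem_weakComponent] at hx hy
  simp only [← Bool.not_eq_true, ← not_or]
  exact fun hxy => hy (hx.tail hxy)

theorem isWeaklyConnected_of_weakComponent_eq_univ (h : weakComponent g v = univ) :
    IsWeaklyConnected g := by
  have : Std.Symm fun x y => g x y = true ∨ g y x = true := ⟨fun _ _ => Or.symm⟩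
  have hreach x : ReflTransGen (fun x y => g x y = true ∨ g y x = true) v x :=
    mem_weakComponent.mp (h ▸ mem_univ x)
  exact fun a b => (ReflTransGen.stdSymm.symm _ _ (hreach a)).trans (hreach b)

theorem card_weakComponent_eq_le_mul [DecidableEq V] (v : V) (S : Finset V) :
    Nat.card {g : BoolDAG V // weakComponent g.1 v = S} ≤
      Nat.card (BoolDAG S) * Nat.card (BoolDAG ↥Sᶜ) := by
  have hcross {g : V → V → Bool} (hg : weakComponent g v = S) {x y : V} (hx : x ∈ S)
      (hy : y ∉ S) : g x y = false ∧ g y x = false := by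
    subst hg
    exact eq_false_of_mem_weakComponent_of_not_mem hx hy
  rw [← Nat.card_prod]
  refine Nat.card_le_card_of_injective (fun g => (g.1.restrict S, g.1.restrict Sᶜ)) ?_
  rintro ⟨⟨g, _⟩, hg⟩ ⟨⟨g', _⟩, hg'⟩ heq
  simp only [Prod.mk.injEq, BoolDAG.restrict, Subtype.mk.injEq] at heq
  congr 2
  funext x y
  by_cases hx : x ∈ S <;> by_cases hy : y ∈ S
  · exact congrFun₂ heq.1 ⟨x, hx⟩ ⟨y, hy⟩
  · exact (hcross hg hx hy).1.trans (hcross hg' hx hy).1.symm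
  · exact (hcross hg hy hx).2.trans (hcross hg' hy hx).2.symm
  · exact congrFun₂ heq.2 ⟨x, mem_compl.mpr hx⟩ ⟨y, mem_compl.mpr hy⟩

end Component

theorem card_boolDAG_le_card_isWeaklyConnected_add_sum [Fintype V] [DecidableEq V] (v : V) :
    Nat.card (BoolDAG V) ≤ Nat.card {g : BoolDAG V // IsWeaklyConnected g.1} +
      ∑ S ∈ (univ : Finset V).ssubsets.erase ∅, dagCount #S * dagCount (Fintype.card V - #S) := by
  classical
  set T := (univ : Finset V).ssubsets.erase ∅
  have hmaps {g : BoolDAG V} (hg : ¬ IsWeaklyConnected g.1) : weakComponent g.1 v ∈ T :=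
    mem_erase.mpr ⟨ne_empty_of_mem (mem_weakComponent.mpr .refl), mem_ssubsets.mpr
      (ssubset_univ_iff.mpr fun h => hg (isWeaklyConnected_of_weakComponent_eq_univ h))⟩
  have hcard (p : BoolDAG V → Prop) [DecidablePred p] : Nat.card {g // p g} = #{g | p g} := by
    rw [Nat.card_eq_fintype_card, Fintype.card_subtype]
  calc Nat.card (BoolDAG V)
      = #{g : BoolDAG V | IsWeaklyConnected g.1} + #{g : BoolDAG V | ¬ IsWeaklyConnected g.1} := by
        rw [card_filter_add_card_filter_not, card_univ, Nat.card_eq_fintype_card]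
    _ ≤ #{g : BoolDAG V | IsWeaklyConnected g.1} + #{g : BoolDAG V | weakComponent g.1 v ∈ T} := by
        gcongr with g _
        exact hmaps
    _ = #{g : BoolDAG V | IsWeaklyConnected g.1} +
          ∑ S ∈ T, #{g : BoolDAG V | weakComponent g.1 v = S} := by
        rw [sum_card_fiberwise_eq_card_filter]
    _ ≤ _ := by
        rw [hcard]
        gcongr with S
        rw [← hcard]
        refine (card_weakComponent_eq_le_mul v S).trans_eq ?_
        rw [BoolDAG.card_eq_dagCount, BoolDAG.card_eq_dagCount, Fintype.card_coe, Fintype.card_coe,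
          card_compl]

theorem connDagCount_eq_card (n : ℕ) :
    connDagCount n = Nat.card {g : BoolDAG (Fin n) // IsWeaklyConnected g.1} :=
  Nat.card_congr (Equiv.subtypeSubtypeEquivSubtypeInter _ _).symm

theorem dagCount_le_connDagCount_add_sum (n : ℕ) [NeZero n] :
    dagCount n ≤ connDagCount n +
      ∑ S ∈ (univ : Finset (Fin n)).ssubsets.erase ∅, dagCount #S * dagCount (n - #S) := by
  simpa [BoolDAG.card_eq_dagCount, connDagCount_eq_card] using
    card_boolDAG_le_card_isWeaklyConnected_add_sum (0 : Fin n)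

theorem pow_mul_sub_le_pow_add_pow {a : ℝ} (ha₀ : 0 ≤ a) (ha₁ : a ≤ 1) {k n : ℕ} (hk : k ≤ n) :
    a ^ (k * (n - k)) ≤ (a ^ (n / 2)) ^ k + (a ^ (n / 2)) ^ (n - k) := by
  rw [← pow_mul, ← pow_mul]
  rcases le_total k (n - k) with h | h
  · exact le_add_of_le_of_nonneg
      (pow_le_pow_of_le_one ha₀ ha₁ (by rw [mul_comm]; gcongr; omega)) (by positivity)
  · exact le_add_of_nonneg_of_le (by positivity)
      (pow_le_pow_of_le_one ha₀ ha₁ (by gcongr; omega))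

theorem sum_pow_card_mul_card_sub_le {ι : Type*} [DecidableEq ι] (s : Finset ι) {a : ℝ}
    (ha₀ : 0 ≤ a) (ha₁ : a ≤ 1) :
    ∑ t ∈ s.ssubsets.erase ∅, a ^ (#t * (#s - #t)) ≤ 2 * ((1 + a ^ (#s / 2)) ^ #s - 1) := by
  set b := a ^ (#s / 2)
  have hnonempty : ∑ t ∈ s.powerset.erase ∅, b ^ #t = (1 + b) ^ #s - 1 := by
    rw [sum_erase_eq_sub (empty_mem_powerset s), card_empty, pow_zero, add_comm,
      ← sum_pow_mul_eq_add_pow b 1 s]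
    simp
  have hproper : ∑ t ∈ s.ssubsets, b ^ (#s - #t) = (1 + b) ^ #s - 1 := by
    rw [ssubsets, sum_erase_eq_sub (mem_powerset_self s), Nat.sub_self, pow_zero,
      ← sum_pow_mul_eq_add_pow 1 b s]
    simp
  calc ∑ t ∈ s.ssubsets.erase ∅, a ^ (#t * (#s - #t))
      ≤ ∑ t ∈ s.ssubsets.erase ∅, (b ^ #t + b ^ (#s - #t)) := by
        refine sum_le_sum fun t ht => pow_mul_sub_le_pow_add_pow ha₀ ha₁ (card_le_card ?_)
        exact (mem_ssubsets.mp (mem_of_mem_erase ht)).subset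
    _ ≤ ∑ t ∈ s.powerset.erase ∅, b ^ #t + ∑ t ∈ s.ssubsets, b ^ (#s - #t) := by
        rw [sum_add_distrib]
        gcongr
        · exact erase_subset s s.powerset
        · exact erase_subset _ _
    _ = 2 * ((1 + b) ^ #s - 1) := by rw [hnonempty, hproper]; ring

theorem one_sub_le_connDagCount_div_dagCount (n : ℕ) [NeZero n] :
    1 - 2 * ((1 + (1 / 2 : ℝ) ^ (n / 2)) ^ n - 1) ≤ connDagCount n / dagCount n := by
  have hA : (0 : ℝ) < dagCount n := mod_cast dagCount_pos n
  have hprod (S : Finset (Fin n)) :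
      (dagCount #S * dagCount (n - #S) : ℝ) ≤ dagCount n * (1 / 2) ^ (#S * (n - #S)) := by
    have h := dagCount_mul_dagCount_mul_two_pow_le #S (n - #S)
    rw [Nat.add_sub_cancel' (card_finset_fin_le S)] at h
    rw [one_div_pow, mul_one_div, le_div_iff₀ (by positivity)]
    exact_mod_cast h
  have hsum := sum_pow_card_mul_card_sub_le (univ : Finset (Fin n)) (a := 1 / 2)
    (by norm_num) (by norm_num)
  rw [card_univ, Fintype.card_fin] at hsum
  have hA_le : (dagCount n : ℝ) ≤
      connDagCount n + dagCount n * (2 * ((1 + (1 / 2 : ℝ) ^ (n / 2)) ^ n - 1)) :=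
    calc (dagCount n : ℝ)
        ≤ connDagCount n + ∑ S ∈ (univ : Finset (Fin n)).ssubsets.erase ∅,
            (dagCount #S * dagCount (n - #S) : ℝ) := mod_cast dagCount_le_connDagCount_add_sum n
      _ ≤ connDagCount n + dagCount n * ∑ S ∈ (univ : Finset (Fin n)).ssubsets.erase ∅,
            (1 / 2 : ℝ) ^ (#S * (n - #S)) := by
          rw [mul_sum]
          exact add_le_add_right (sum_le_sum fun S _ => hprod S) _
      _ ≤ _ := by gcongr
  rw [le_div_iff₀ hA]
  linarith

theorem tendsto_one_add_half_pow_half_pow :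
    Tendsto (fun n : ℕ => (1 + (1 / 2 : ℝ) ^ (n / 2)) ^ n) atTop (nhds 1) := by
  have hm : Tendsto (fun m : ℕ => (2 * m + 1 : ℝ) * (1 / 2) ^ m) atTop (nhds 0) := by
    have h₁ := tendsto_self_mul_const_pow_of_lt_one (r := 1 / 2) (by norm_num) (by norm_num)
    have h₂ := tendsto_pow_atTop_nhds_zero_of_lt_one (r := (1 / 2 : ℝ)) (by norm_num) (by norm_num)
    simpa [add_mul, mul_assoc] using (h₁.const_mul 2).add h₂
  have hlin : Tendsto (fun n : ℕ => (n : ℝ) * (1 / 2) ^ (n / 2)) atTop (nhds 0) := by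
    refine squeeze_zero (fun n => by positivity) (fun n => ?_)
      (hm.comp (Nat.tendsto_div_const_atTop two_ne_zero))
    simp only [Function.comp_apply]
    gcongr
    exact_mod_cast (by omega : n ≤ 2 * (n / 2) + 1)
  have hexp : Tendsto (fun n : ℕ => Real.exp (n * (1 / 2) ^ (n / 2))) atTop (nhds 1) := by
    have h := (Real.continuous_exp.tendsto 0).comp hlin
    rwa [Real.exp_zero] at h
  refine tendsto_of_tendsto_of_tendsto_of_le_of_le tendsto_const_nhds hexp
    (fun n => one_le_pow₀ (le_add_of_nonneg_right (by positivity))) (fun n => ?_)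
  rw [Real.exp_nat_mul]
  gcongr
  linarith [Real.add_one_le_exp ((1 / 2 : ℝ) ^ (n / 2))]

theorem connDagCount_div_dagCount_tendsto_one :
    Tendsto (fun n : ℕ => (connDagCount n : ℝ) / dagCount n) atTop (nhds 1) := by
  have hlower : Tendsto (fun n : ℕ => 1 - 2 * ((1 + (1 / 2 : ℝ) ^ (n / 2)) ^ n - 1)) atTop
      (nhds 1) := by
    simpa using ((tendsto_one_add_half_pow_half_pow.sub_const 1).const_mul 2).const_sub 1
  refine tendsto_of_tendsto_of_tendsto_of_le_of_le' hlower tendsto_const_nhds ?_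
    (Eventually.of_forall fun n => ?_)
  · filter_upwards [eventually_ne_atTop 0] with n hn
    have : NeZero n := ⟨hn⟩
    exact one_sub_le_connDagCount_div_dagCount n
  · rw [connDagCount_eq_card]
    exact div_le_one_of_le₀ (mod_cast Finite.card_subtype_le _) (Nat.cast_nonneg _)
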